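/- arXiv:1509.06020 — 2 statements merged into one kernel-verified Lean document; each statement's English description precedes it below -/
import Mathlib

section
/- Let D : ℝ → ℝ be continuously differentiable and nondecreasing with D(0) = 0, and suppose there exist 0 < m < M such that m ≤ D′(ξ) ≤ M for all |ξ| ≥ 1. Then there exist constants c₀ ≥ 0 and c₁ > 0 such that for all s ∈ ℝ: (D(s))² + s² ≤ c₀ + c₁·D(s)·s. In fact one may take c₀ = 4 and c₁ = 2/m + max{sup_{|ξ|≤1} D′(ξ), M}. -/
/-!
Monotonicity and `D 0 = 0` make `D s` and `s` of the same sign, so `D s * s = |D s| * |s|`.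
Since `0 ≤ D' ≤ L := max (sup_{|ξ| ≤ 1} D') M` everywhere, `|D s| ≤ L |s|`, which gives
`D s ^ 2 ≤ L * (D s * s)`. Since `D' ≥ m` for `|ξ| ≥ 1`, `|D s| ≥ m (|s| - 1)`, which gives
`s ^ 2 ≤ 2 (s ^ 2 - |s|) + 1 ≤ 1 + (2 / m) * (D s * s)`.
-/

section

variable {f : ℝ → ℝ}

theorem Monotone.apply_mul_nonneg (hf : Monotone f) (h0 : f 0 = 0) (s : ℝ) :
    0 ≤ f s * s := by
  rcases le_total 0 s with hs | hs
  · exact mul_nonneg (h0 ▸ hf hs) hs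
  · exact mul_nonneg_of_nonpos_of_nonpos (h0 ▸ hf hs) hs

theorem Monotone.apply_mul_eq_abs_mul_abs (hf : Monotone f) (h0 : f 0 = 0) (s : ℝ) :
    f s * s = |f s| * |s| := by
  rw [← abs_mul, abs_of_nonneg (hf.apply_mul_nonneg h0 s)]

theorem abs_apply_le_mul_abs_of_abs_deriv_le (hf : Differentiable ℝ f) (h0 : f 0 = 0) {C : ℝ}
    (hC : ∀ x, |deriv f x| ≤ C) (s : ℝ) : |f s| ≤ C * |s| := by
  simpa [h0] using Convex.norm_image_sub_le_of_norm_deriv_le (fun x _ => hf x)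
    (fun x _ => hC x) convex_univ (Set.mem_univ 0) (Set.mem_univ s)

theorem Monotone.sq_apply_le_mul_apply_mul (hf : Monotone f) (hd : Differentiable ℝ f)
    (h0 : f 0 = 0) {C : ℝ} (hC : ∀ x, |deriv f x| ≤ C) (s : ℝ) :
    f s ^ 2 ≤ C * (f s * s) := by
  rw [hf.apply_mul_eq_abs_mul_abs h0, ← sq_abs, sq, mul_left_comm]
  exact mul_le_mul_of_nonneg_left (abs_apply_le_mul_abs_of_abs_deriv_le hd h0 hC s)
    (abs_nonneg _)

theorem Monotone.mul_abs_sub_one_le_abs_apply (hf : Monotone f) (hd : Differentiable ℝ f)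
    (h0 : f 0 = 0) {m : ℝ} (hm : 0 ≤ m) (hderiv : ∀ ξ, 1 ≤ |ξ| → m ≤ deriv f ξ)
    (s : ℝ) : m * (|s| - 1) ≤ |f s| := by
  rcases le_or_gt 1 s with hs | hs
  · have hgrowth := (convex_Ici (1 : ℝ)).mul_sub_le_image_sub_of_le_deriv
      hd.continuous.continuousOn hd.differentiableOn
      (fun ξ hξ => hderiv ξ (le_abs.2 (Or.inl (interior_subset hξ))))
      1 Set.self_mem_Ici s hs hs
    have hf1 : 0 ≤ f 1 := h0 ▸ hf zero_le_one
    rw [abs_of_nonneg (by linarith : (0 : ℝ) ≤ s)]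
    linarith [le_abs_self (f s)]
  rcases le_or_gt s (-1) with hs' | hs'
  · have hgrowth := (convex_Iic (-1 : ℝ)).mul_sub_le_image_sub_of_le_deriv
      hd.continuous.continuousOn hd.differentiableOn
      (fun ξ hξ => hderiv ξ
        (le_abs.2 (Or.inr (le_neg.1 (interior_subset (s := Set.Iic (-1)) hξ)))))
      s hs' (-1) Set.self_mem_Iic hs'
    have hf1 : f (-1) ≤ 0 := h0 ▸ hf (by norm_num)
    rw [abs_of_neg (by linarith : s < 0)]
    linarith [neg_abs_le (f s)]
  · have hs1 : |s| - 1 ≤ 0 := by rw [sub_nonpos, abs_le]; constructor <;> linarith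
    exact (mul_nonpos_of_nonneg_of_nonpos hm hs1).trans (abs_nonneg _)

theorem Monotone.sq_le_one_add_two_div_mul (hf : Monotone f) (hd : Differentiable ℝ f)
    (h0 : f 0 = 0) {m : ℝ} (hm : 0 < m) (hderiv : ∀ ξ, 1 ≤ |ξ| → m ≤ deriv f ξ)
    (s : ℝ) : s ^ 2 ≤ 1 + 2 / m * (f s * s) := by
  have hlower := hf.mul_abs_sub_one_le_abs_apply hd h0 hm.le hderiv s
  have hprod : m * (|s| - 1) * |s| ≤ f s * s := by
    rw [hf.apply_mul_eq_abs_mul_abs h0]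
    exact mul_le_mul_of_nonneg_right hlower (abs_nonneg s)
  have hscaled : 2 * ((|s| - 1) * |s|) ≤ 2 / m * (f s * s) := by
    rw [div_mul_eq_mul_div, le_div_iff₀ hm]
    linarith
  nlinarith [sq_abs s, sq_nonneg (|s| - 1)]

end

theorem damping_comparison_general (D : ℝ → ℝ) (hC1 : ContDiff ℝ 1 D)
    (hmono : Monotone D) (h0 : D 0 = 0) (m M : ℝ) (hm : 0 < m)
    (hderiv : ∀ ξ : ℝ, 1 ≤ |ξ| → m ≤ deriv D ξ ∧ deriv D ξ ≤ M) :
    (∃ c₀ c₁ : ℝ, 0 ≤ c₀ ∧ 0 < c₁ ∧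
      ∀ s : ℝ, (D s) ^ 2 + s ^ 2 ≤ c₀ + c₁ * (D s * s)) ∧
    (∀ s : ℝ, (D s) ^ 2 + s ^ 2 ≤
      4 + (2 / m + max (sSup (deriv D '' {ξ : ℝ | |ξ| ≤ 1})) M) * (D s * s)) := by
  have hdiff : Differentiable ℝ D := hC1.differentiable one_ne_zero
  set L := max (sSup (deriv D '' {ξ : ℝ | |ξ| ≤ 1})) M
  have hbdd : BddAbove (deriv D '' {ξ : ℝ | |ξ| ≤ 1}) := by
    have hcompact : IsCompact {ξ : ℝ | |ξ| ≤ 1} := by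
      simpa [Metric.closedBall, Real.dist_eq] using isCompact_closedBall (0 : ℝ) 1
    exact (hcompact.image (hC1.continuous_deriv le_rfl)).bddAbove
  have hL : ∀ ξ, |deriv D ξ| ≤ L := by
    intro ξ
    rw [abs_of_nonneg hmono.deriv_nonneg]
    rcases le_total |ξ| 1 with hξ | hξ
    · exact (le_csSup hbdd ⟨ξ, hξ, rfl⟩).trans (le_max_left _ _)
    · exact (hderiv ξ hξ).2.trans (le_max_right _ _)
  have main : ∀ s, D s ^ 2 + s ^ 2 ≤ 4 + (2 / m + L) * (D s * s) := by
    intro s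
    have hsq := hmono.sq_apply_le_mul_apply_mul hdiff h0 hL s
    have hs := hmono.sq_le_one_add_two_div_mul hdiff h0 hm (fun ξ hξ => (hderiv ξ hξ).1) s
    linarith [add_mul (2 / m) L (D s * s)]
  have hc₁ : 0 < 2 / m + L :=
    add_pos_of_pos_of_nonneg (by positivity) ((abs_nonneg _).trans (hL 0))
  exact ⟨⟨4, 2 / m + L, by norm_num, hc₁, main⟩, main⟩

/-- Pointwise comparison of damping terms: if `D` is `C¹`, nondecreasing, `D 0 = 0`,
and `m ≤ D' ξ ≤ M` for `|ξ| ≥ 1` (with `0 < m < M`), then there are `c₀ ≥ 0`, `c₁ > 0`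
with `(D s)^2 + s^2 ≤ c₀ + c₁ * D s * s` for all `s`; in fact one may take `c₀ = 4`
and `c₁ = 2/m + max (sup of D' over |ξ| ≤ 1) M`. -/
theorem damping_comparison (D : ℝ → ℝ) (hC1 : ContDiff ℝ 1 D)
    (hmono : Monotone D) (h0 : D 0 = 0) (m M : ℝ) (hm : 0 < m) (hmM : m < M)
    (hderiv : ∀ ξ : ℝ, 1 ≤ |ξ| → m ≤ deriv D ξ ∧ deriv D ξ ≤ M) :
    (∃ c₀ c₁ : ℝ, 0 ≤ c₀ ∧ 0 < c₁ ∧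
      ∀ s : ℝ, (D s) ^ 2 + s ^ 2 ≤ c₀ + c₁ * (D s * s)) ∧
    (∀ s : ℝ, (D s) ^ 2 + s ^ 2 ≤
      4 + (2 / m + max (sSup (deriv D '' {ξ : ℝ | |ξ| ≤ 1})) M) * (D s * s)) :=
  damping_comparison_general D hC1 hmono h0 m M hm hderiv
end

section
/- Let H and H₁ be real inner product spaces, let G : H → H₁ and L : H → H be continuous linear maps satisfying ⟪L x, y⟫ = −⟪G x, G y⟫ for all x, y ∈ H, and let γ ∈ ℝ. Define f_B : H → H by f_B(x) = (γ − ‖G x‖²)·L x. Let u, w : ℝ → H be continuously differentiable, set z = u − w and 𝓕(τ) = f_B(u(τ)) − f_B(w(τ)). Then for all real t ≤ T: ∫_t^T ⟪𝓕(τ), z′(τ)⟫ dτ = [ ⟪𝓕(τ), z(τ)⟫ + (γ/2)·‖G z(τ)‖² − ½·‖G u(τ)‖²·‖G z(τ)‖² + (‖G u(τ)‖² − ‖G w(τ)‖²)·⟪L w(τ), z(τ)⟫ ] evaluated from τ = t to τ = T, minus ∫_t^T (‖G u(τ)‖² − ‖G w(τ)‖²)·⟪L w(τ), z′(τ)⟫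 dτ, plus ∫_t^T ⟪L u(τ), u′(τ)⟫·‖G z(τ)‖² dτ. -/
open scoped RealInnerProductSpace
open intervalIntegral

/-!
Writing `f_B(u) - f_B(w) = (γ - ‖Gu‖²) L z - (‖Gu‖² - ‖Gw‖²) L w`, Green's identity
`⟪L x, y⟫ = -⟪G x, G y⟫` collapses the bracketed boundary term to `-½ (γ - ‖Gu‖²) ‖Gz‖²`.
Since `(‖G v‖²)' = -2 ⟪L v, v'⟫`, the derivative of this energy is
`(γ - ‖Gu‖²) ⟪L z, z'⟫ - ⟪L u, u'⟫ ‖Gz‖²`, and the fundamental theorem of calculus gives the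
identity; the term `(‖Gu‖² - ‖Gw‖²) ⟪L w, z'⟫` is simply carried along.
-/

section Berger

variable {H H₁ : Type*} [NormedAddCommGroup H] [InnerProductSpace ℝ H]
  [NormedAddCommGroup H₁] [InnerProductSpace ℝ H₁] (G : H →L[ℝ] H₁) (L : H →L[ℝ] H)

theorem berger_sub_eq (γ : ℝ) (x y : H) :
    (γ - ‖G x‖ ^ 2) • L x - (γ - ‖G y‖ ^ 2) • L y
      = (γ - ‖G x‖ ^ 2) • L (x - y) - (‖G x‖ ^ 2 - ‖G y‖ ^ 2) • L y := by
  simp only [map_sub, smul_sub, sub_smul]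
  abel

variable {G L}

theorem berger_boundary_term_eq (hGL : ∀ x y : H, ⟪L x, y⟫ = -⟪G x, G y⟫) (γ : ℝ) (x y : H) :
    ⟪(γ - ‖G x‖ ^ 2) • L x - (γ - ‖G y‖ ^ 2) • L y, x - y⟫ + (γ / 2) * ‖G (x - y)‖ ^ 2
        - (1 / 2) * ‖G x‖ ^ 2 * ‖G (x - y)‖ ^ 2 + (‖G x‖ ^ 2 - ‖G y‖ ^ 2) * ⟪L y, x - y⟫
      = -(1 / 2) * (γ - ‖G x‖ ^ 2) * ‖G (x - y)‖ ^ 2 := by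
  rw [berger_sub_eq, inner_sub_left, real_inner_smul_left, real_inner_smul_left, hGL (x - y),
    real_inner_self_eq_norm_sq]
  ring

theorem HasDerivAt.norm_sq_map_of_green (hGL : ∀ x y : H, ⟪L x, y⟫ = -⟪G x, G y⟫)
    {v : ℝ → H} {v' : H} {τ : ℝ} (hv : HasDerivAt v v' τ) :
    HasDerivAt (fun s => ‖G (v s)‖ ^ 2) (-2 * ⟪L (v τ), v'⟫) τ := by
  simpa [hGL] using (G.hasFDerivAt.comp_hasDerivAt τ hv).norm_sq

theorem hasDerivAt_berger_energy (hGL : ∀ x y : H, ⟪L x, y⟫ = -⟪G x, G y⟫) (γ : ℝ)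
    {u z : ℝ → H} {u' z' : H} {τ : ℝ} (hu : HasDerivAt u u' τ) (hz : HasDerivAt z z' τ) :
    HasDerivAt (fun s => -(1 / 2) * (γ - ‖G (u s)‖ ^ 2) * ‖G (z s)‖ ^ 2)
      ((γ - ‖G (u τ)‖ ^ 2) * ⟪L (z τ), z'⟫ - ⟪L (u τ), u'⟫ * ‖G (z τ)‖ ^ 2) τ := by
  refine ((((hu.norm_sq_map_of_green hGL).const_sub γ).const_mul (-(1 / 2) : ℝ)).mul
    (hz.norm_sq_map_of_green hGL)).congr_deriv ?_
  ring

theorem integral_berger_principal_part (hGL : ∀ x y : H, ⟪L x, y⟫ = -⟪G x, G y⟫) (γ : ℝ)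
    {u z : ℝ → H} (hu : ContDiff ℝ 1 u) (hz : ContDiff ℝ 1 z) (t T : ℝ) :
    ∫ τ in t..T, (γ - ‖G (u τ)‖ ^ 2) * ⟪L (z τ), deriv z τ⟫
      = (-(1 / 2) * (γ - ‖G (u T)‖ ^ 2) * ‖G (z T)‖ ^ 2
          - -(1 / 2) * (γ - ‖G (u t)‖ ^ 2) * ‖G (z t)‖ ^ 2)
        + ∫ τ in t..T, ⟪L (u τ), deriv u τ⟫ * ‖G (z τ)‖ ^ 2 := by
  have hu' := hu.continuous_deriv le_rfl
  have hz' := hz.continuous_deriv le_rfl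
  have hA : Continuous fun τ => (γ - ‖G (u τ)‖ ^ 2) * ⟪L (z τ), deriv z τ⟫ := by fun_prop
  have hK : Continuous fun τ => ⟪L (u τ), deriv u τ⟫ * ‖G (z τ)‖ ^ 2 := by fun_prop
  rw [← integral_eq_sub_of_hasDerivAt
    (fun τ _ => hasDerivAt_berger_energy hGL γ (hu.differentiable one_ne_zero τ).hasDerivAt
      (hz.differentiable one_ne_zero τ).hasDerivAt) ((hA.sub hK).intervalIntegrable t T),
    integral_sub (hA.intervalIntegrable t T) (hK.intervalIntegrable t T)]
  ring

end Berger

theorem berger_difference_decomposition_general {H H₁ : Type*}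
    [NormedAddCommGroup H] [InnerProductSpace ℝ H]
    [NormedAddCommGroup H₁] [InnerProductSpace ℝ H₁]
    (G : H →L[ℝ] H₁) (L : H →L[ℝ] H)
    (hGL : ∀ x y : H, ⟪L x, y⟫ = -⟪G x, G y⟫)
    (γ : ℝ) (fB : H → H) (hfB : ∀ x, fB x = (γ - ‖G x‖ ^ 2) • L x)
    (u w : ℝ → H) (hu : ContDiff ℝ 1 u) (hw : ContDiff ℝ 1 w)
    (z : ℝ → H) (hz : ∀ τ, z τ = u τ - w τ)
    (𝓕 : ℝ → H) (h𝓕 : ∀ τ, 𝓕 τ = fB (u τ) - fB (w τ))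
    (t T : ℝ) :
    (∫ τ in t..T, ⟪𝓕 τ, deriv z τ⟫) =
      ((⟪𝓕 T, z T⟫ + (γ / 2) * ‖G (z T)‖ ^ 2
          - (1 / 2) * ‖G (u T)‖ ^ 2 * ‖G (z T)‖ ^ 2
          + (‖G (u T)‖ ^ 2 - ‖G (w T)‖ ^ 2) * ⟪L (w T), z T⟫)
        - (⟪𝓕 t, z t⟫ + (γ / 2) * ‖G (z t)‖ ^ 2
          - (1 / 2) * ‖G (u t)‖ ^ 2 * ‖G (z t)‖ ^ 2
          + (‖G (u t)‖ ^ 2 - ‖G (w t)‖ ^ 2) * ⟪L (w t), z t⟫))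
      - (∫ τ in t..T, (‖G (u τ)‖ ^ 2 - ‖G (w τ)‖ ^ 2) * ⟪L (w τ), deriv z τ⟫)
      + ∫ τ in t..T, ⟪L (u τ), deriv u τ⟫ * ‖G (z τ)‖ ^ 2 := by
  have hzC : ContDiff ℝ 1 z := (funext hz : z = _) ▸ hu.sub hw
  have h𝓕z : ∀ τ, 𝓕 τ
      = (γ - ‖G (u τ)‖ ^ 2) • L (z τ) - (‖G (u τ)‖ ^ 2 - ‖G (w τ)‖ ^ 2) • L (w τ) := fun τ => by
    rw [h𝓕, hfB, hfB, hz, berger_sub_eq]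
  have hboundary : ∀ τ, ⟪𝓕 τ, z τ⟫ + (γ / 2) * ‖G (z τ)‖ ^ 2
      - (1 / 2) * ‖G (u τ)‖ ^ 2 * ‖G (z τ)‖ ^ 2
      + (‖G (u τ)‖ ^ 2 - ‖G (w τ)‖ ^ 2) * ⟪L (w τ), z τ⟫
        = -(1 / 2) * (γ - ‖G (u τ)‖ ^ 2) * ‖G (z τ)‖ ^ 2 := fun τ => by
    rw [h𝓕, hfB, hfB, hz, berger_boundary_term_eq hGL]
  have hz' := hzC.continuous_deriv le_rfl
  have hA : Continuous fun τ => (γ - ‖G (u τ)‖ ^ 2) * ⟪L (z τ), deriv z τ⟫ := by fun_prop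
  have hJ : Continuous fun τ => (‖G (u τ)‖ ^ 2 - ‖G (w τ)‖ ^ 2) * ⟪L (w τ), deriv z τ⟫ := by
    fun_prop
  rw [hboundary, hboundary]
  simp only [h𝓕z, inner_sub_left, real_inner_smul_left]
  rw [integral_sub (hA.intervalIntegrable t T) (hJ.intervalIntegrable t T),
    integral_berger_principal_part hGL γ hu hzC]
  ring

/-- Decomposition of the Berger nonlinearity for the difference of two solutions:
with `fB x = (γ − ‖G x‖²) • L x`, `⟪L x, y⟫ = −⟪G x, G y⟫`, `z = u − w` and
`𝓕 τ = fB (u τ) − fB (w τ)`, one has for `t ≤ T`: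
`∫_t^T ⟪𝓕, z'⟫ = [⟪𝓕, z⟫ + (γ/2)‖Gz‖² − ½‖Gu‖²‖Gz‖² + (‖Gu‖²−‖Gw‖²)⟪Lw, z⟫]_t^T
  − ∫_t^T (‖Gu‖²−‖Gw‖²)⟪Lw, z'⟫ + ∫_t^T ⟪Lu, u'⟫‖Gz‖²`. -/
theorem berger_difference_decomposition {H H₁ : Type*}
    [NormedAddCommGroup H] [InnerProductSpace ℝ H]
    [NormedAddCommGroup H₁] [InnerProductSpace ℝ H₁]
    (G : H →L[ℝ] H₁) (L : H →L[ℝ] H)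
    (hGL : ∀ x y : H, ⟪L x, y⟫ = -⟪G x, G y⟫)
    (γ : ℝ) (fB : H → H) (hfB : ∀ x, fB x = (γ - ‖G x‖ ^ 2) • L x)
    (u w : ℝ → H) (hu : ContDiff ℝ 1 u) (hw : ContDiff ℝ 1 w)
    (z : ℝ → H) (hz : ∀ τ, z τ = u τ - w τ)
    (𝓕 : ℝ → H) (h𝓕 : ∀ τ, 𝓕 τ = fB (u τ) - fB (w τ))
    (t T : ℝ) (htT : t ≤ T) :
    (∫ τ in t..T, ⟪𝓕 τ, deriv z τ⟫) =
      ((⟪𝓕 T, z T⟫ + (γ / 2) * ‖G (z T)‖ ^ 2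
          - (1 / 2) * ‖G (u T)‖ ^ 2 * ‖G (z T)‖ ^ 2
          + (‖G (u T)‖ ^ 2 - ‖G (w T)‖ ^ 2) * ⟪L (w T), z T⟫)
        - (⟪𝓕 t, z t⟫ + (γ / 2) * ‖G (z t)‖ ^ 2
          - (1 / 2) * ‖G (u t)‖ ^ 2 * ‖G (z t)‖ ^ 2
          + (‖G (u t)‖ ^ 2 - ‖G (w t)‖ ^ 2) * ⟪L (w t), z t⟫))
      - (∫ τ in t..T, (‖G (u τ)‖ ^ 2 - ‖G (w τ)‖ ^ 2) * ⟪L (w τ), deriv z τ⟫)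
      + ∫ τ in t..T, ⟪L (u τ), deriv u τ⟫ * ‖G (z τ)‖ ^ 2 :=
  berger_difference_decomposition_general G L hGL γ fB hfB u w hu hw z hz 𝓕 h𝓕 t T
end
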